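/- arXiv:2604.10857 — 5 statements merged into one kernel-verified Lean document; each statement's English description precedes it below -/
import Mathlib

section
/- Let d ≥ 1, τ > 0, R > 0, and let ν be a probability measure on ℝ^d supported in [−R,R]^d. Then the score s_{ν,τ} is globally Lipschitz on ℝ^d with Lipschitz constant at most 1/τ² + R²d/τ⁴; equivalently, the operator norm of its Jacobian satisfies ‖∇ s_{ν,τ}(x)‖_op ≤ 1/τ² + R²d/τ⁴ for every x ∈ ℝ^d. -/
/-!
Write `π_x` for the posterior of `Y ~ ν` given `Y + τZ = x`, i.e. `ν` reweighted by the
likelihood `y ↦ φ(x - y)`. Differentiating `log p` under the integral gives Tweedie's formula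
`s(x) = τ⁻² (E_{π_x}[Y] - x)`, and differentiating once more gives
`∇s(x) = τ⁻⁴ Cov(π_x) - τ⁻² I`. Since `π_x ≪ ν` lives in the cube `[-R, R]^d`, the covariance
of `π_x` has operator norm at most its second moment `E_{π_x}‖Y‖² ≤ R²d`; the triangle
inequality bounds the Jacobian, and the mean value inequality turns this into the Lipschitz bound.
-/

open MeasureTheory

/-- Density of `N(0, τ² I_d)` on `ℝ^d`. -/
noncomputable def gphi (d : ℕ) (τ : ℝ) (z : EuclideanSpace ℝ (Fin d)) : ℝ :=
  (2 * Real.pi * τ ^ 2) ^ (-(d : ℝ) / 2) * Real.exp (-‖z‖ ^ 2 / (2 * τ ^ 2))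

/-- Density of `ν * N(0, τ² I_d)`. -/
noncomputable def pdens (d : ℕ) (τ : ℝ) (ν : Measure (EuclideanSpace ℝ (Fin d)))
    (x : EuclideanSpace ℝ (Fin d)) : ℝ :=
  ∫ y, gphi d τ (x - y) ∂ν

/-- Score `∇ log p_{ν,τ}`. -/
noncomputable def score (d : ℕ) (τ : ℝ) (ν : Measure (EuclideanSpace ℝ (Fin d)))
    (x : EuclideanSpace ℝ (Fin d)) : EuclideanSpace ℝ (Fin d) :=
  gradient (fun z => Real.log (pdens d τ ν z)) x

open InnerProductSpace

lemma continuous_uncurry_rankOne {E : Type*} [NormedAddCommGroup E] [InnerProductSpace ℝ E] :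
    Continuous (Function.uncurry (rankOne ℝ · · : E → E → E →L[ℝ] E)) :=
  (ContinuousLinearMap.smulRightL ℝ E E).continuous₂.comp₂
    ((innerSL ℝ).continuous.comp continuous_snd) continuous_fst

@[fun_prop]
lemma Continuous.rankOne {X E : Type*} [TopologicalSpace X] [NormedAddCommGroup E]
    [InnerProductSpace ℝ E] {f g : X → E} (hf : Continuous f) (hg : Continuous g) :
    Continuous fun x => rankOne ℝ (f x) (g x) :=
  continuous_uncurry_rankOne.comp₂ hf hg

section Covariance

variable {Ω E : Type*} [MeasurableSpace Ω] {μ : Measure Ω} [NormedAddCommGroup E]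
  [InnerProductSpace ℝ E] {f : Ω → E}

lemma MeasureTheory.MemLp.integrable_rankOne_self (hf : MemLp f 2 μ) :
    Integrable (fun ω => rankOne ℝ (f ω) (f ω)) μ :=
  (hf.integrable_norm_pow two_ne_zero).mono'
    (continuous_uncurry_rankOne.comp_aestronglyMeasurable₂ hf.1 hf.1)
    (ae_of_all _ fun ω => by rw [norm_rankOne, sq])

variable [IsProbabilityMeasure μ] [CompleteSpace E]

lemma integral_rankOne_sub_integral (hf : MemLp f 2 μ) :
    ∫ ω, rankOne ℝ (f ω - ∫ ω, f ω ∂μ) (f ω - ∫ ω, f ω ∂μ) ∂μ =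
      ∫ ω, rankOne ℝ (f ω) (f ω) ∂μ - rankOne ℝ (∫ ω, f ω ∂μ) (∫ ω, f ω ∂μ) := by
  set m := ∫ ω, f ω ∂μ
  have hf1 : Integrable f μ := hf.integrable one_le_two
  have hleft : ∫ ω, rankOne ℝ m (f ω) ∂μ = rankOne ℝ m m :=
    (rankOne ℝ m).integral_comp_commSL (by simp) hf1
  have hright : ∫ ω, rankOne ℝ (f ω) m ∂μ = rankOne ℝ m m := by
    simpa using ((rankOne ℝ).flip m : E →L[ℝ] E →L[ℝ] E).integral_comp_comm hf1
  have hexpand : ∀ ω, rankOne ℝ (f ω - m) (f ω - m) =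
      rankOne ℝ (f ω) (f ω) - rankOne ℝ m (f ω) - (rankOne ℝ (f ω) m - rankOne ℝ m m) :=
    fun ω => by simp only [map_sub, sub_apply]
  have hff := hf.integrable_rankOne_self
  have hmf := (rankOne ℝ m).integrable_comp hf1
  have hfm : Integrable (fun ω => rankOne ℝ (f ω) m) μ := by
    simpa using ((rankOne ℝ).flip m : E →L[ℝ] E →L[ℝ] E).integrable_comp hf1
  simp_rw [hexpand]
  rw [integral_sub (by exact hff.sub hmf) (by exact hfm.sub (integrable_const _)),
    integral_sub hff hmf, integral_sub hfm (integrable_const _), hleft, hright]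
  simp

lemma integral_sq_norm_sub_eq (hf : MemLp f 2 μ) (c : E) :
    ∫ ω, ‖f ω - c‖ ^ 2 ∂μ = ∫ ω, ‖f ω - ∫ ω, f ω ∂μ‖ ^ 2 ∂μ + ‖(∫ ω, f ω ∂μ) - c‖ ^ 2 := by
  set m := ∫ ω, f ω ∂μ
  have hf1 : Integrable f μ := hf.integrable one_le_two
  have hcentered : ∫ ω, ⟪m - c, f ω - m⟫_ℝ ∂μ = 0 := by
    rw [integral_inner (f := fun ω => f ω - m) (hf1.sub (integrable_const m)),
      integral_sub hf1 (integrable_const m)]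
    simp [m]
  have hexpand : ∀ ω, ‖f ω - c‖ ^ 2 = ‖f ω - m‖ ^ 2 + 2 * ⟪m - c, f ω - m⟫_ℝ + ‖m - c‖ ^ 2 :=
    fun ω => by rw [real_inner_comm, ← norm_add_sq_real]; congr 2; abel
  have hsq : Integrable (fun ω => ‖f ω - m‖ ^ 2) μ :=
    (hf.sub (memLp_const m)).integrable_norm_pow two_ne_zero
  have hinner : Integrable (fun ω => 2 * ⟪m - c, f ω - m⟫_ℝ) μ :=
    ((hf1.sub (integrable_const m)).const_inner (m - c)).const_mul 2
  simp_rw [hexpand]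
  rw [integral_add (f := fun ω => ‖f ω - m‖ ^ 2 + 2 * ⟪m - c, f ω - m⟫_ℝ) (hsq.add hinner)
    (integrable_const _), integral_add hsq hinner, integral_const_mul, hcentered]
  simp

lemma norm_integral_rankOne_sub_rankOne_integral_le (hf : MemLp f 2 μ) (c : E) :
    ‖∫ ω, rankOne ℝ (f ω) (f ω) ∂μ - rankOne ℝ (∫ ω, f ω ∂μ) (∫ ω, f ω ∂μ)‖ ≤
      ∫ ω, ‖f ω - c‖ ^ 2 ∂μ := by
  rw [← integral_rankOne_sub_integral hf, integral_sq_norm_sub_eq hf c]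
  calc _ ≤ ∫ ω, ‖rankOne ℝ (f ω - ∫ ω, f ω ∂μ) (f ω - ∫ ω, f ω ∂μ)‖ ∂μ :=
        norm_integral_le_integral_norm _
    _ = ∫ ω, ‖f ω - ∫ ω, f ω ∂μ‖ ^ 2 ∂μ := by simp only [norm_rankOne, sq]
    _ ≤ _ := le_add_of_nonneg_right (sq_nonneg _)

end Covariance

section Gaussian

variable {d : ℕ} {τ : ℝ}

lemma gphi_eq_mul_exp (z : EuclideanSpace ℝ (Fin d)) :
    gphi d τ z = gphi d τ 0 * Real.exp (-‖z‖ ^ 2 / (2 * τ ^ 2)) := by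
  simp [gphi]

lemma gphi_pos (hτ : τ ≠ 0) (z : EuclideanSpace ℝ (Fin d)) : 0 < gphi d τ z := by
  unfold gphi; positivity

@[fun_prop]
lemma continuous_gphi : Continuous (gphi d τ) := by
  unfold gphi; fun_prop

lemma gphi_le_gphi_zero (hτ : τ ≠ 0) (z : EuclideanSpace ℝ (Fin d)) :
    gphi d τ z ≤ gphi d τ 0 := by
  rw [gphi_eq_mul_exp z]
  refine mul_le_of_le_one_right (gphi_pos hτ 0).le (Real.exp_le_one_iff.2 ?_)
  exact div_nonpos_of_nonpos_of_nonneg (neg_nonpos.2 (sq_nonneg _)) (by positivity)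

lemma sq_norm_mul_gphi_le (hτ : τ ≠ 0) (z : EuclideanSpace ℝ (Fin d)) :
    ‖z‖ ^ 2 * gphi d τ z ≤ 2 * τ ^ 2 * gphi d τ 0 := by
  set u := ‖z‖ ^ 2 / (2 * τ ^ 2)
  have hτ2 : 0 < 2 * τ ^ 2 := by positivity
  have hu : u * Real.exp (-u) ≤ 1 := by
    rw [Real.exp_neg, ← div_eq_mul_inv, div_le_one (Real.exp_pos u)]
    linarith [Real.add_one_le_exp u]
  rw [gphi_eq_mul_exp z, neg_div]
  calc ‖z‖ ^ 2 * (gphi d τ 0 * Real.exp (-u)) = 2 * τ ^ 2 * gphi d τ 0 * (u * Real.exp (-u)) := by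
        simp only [u]; field_simp
    _ ≤ 2 * τ ^ 2 * gphi d τ 0 := mul_le_of_le_one_right (mul_nonneg hτ2.le (gphi_pos hτ 0).le) hu

lemma norm_mul_gphi_le (hτ : τ ≠ 0) (z : EuclideanSpace ℝ (Fin d)) :
    ‖z‖ * gphi d τ z ≤ (1 + 2 * τ ^ 2) * gphi d τ 0 := by
  have h := sq_norm_mul_gphi_le hτ z
  have h0 := gphi_le_gphi_zero hτ z
  have hpos := (gphi_pos hτ z).le
  -- `‖z‖ ≤ 1 + ‖z‖ ^ 2`
  nlinarith [mul_nonneg hpos (sq_nonneg (‖z‖ - 1))]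

lemma hasFDerivAt_gphi_sub (x y : EuclideanSpace ℝ (Fin d)) :
    HasFDerivAt (fun x => gphi d τ (x - y))
      ((τ ^ 2)⁻¹ • innerSL ℝ (gphi d τ (x - y) • (y - x))) x := by
  have h := ((((hasFDerivAt_id x).sub_const y).norm_sq.const_mul (-(2 * τ ^ 2)⁻¹)).exp).const_mul
    (gphi d τ 0)
  refine (h.congr_of_eventuallyEq (Filter.Eventually.of_forall fun z => ?_)).congr_fderiv ?_
  · simp only [gphi_eq_mul_exp (z - y), id]
    ring_nf
  · ext v
    simp only [smul_apply, innerSL_apply_apply, smul_eq_mul, nsmul_eq_mul,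
      ContinuousLinearMap.comp_apply, ContinuousLinearMap.id_apply, real_inner_smul_left, id]
    rw [gphi_eq_mul_exp (x - y), ← neg_sub x y, inner_neg_left]
    ring_nf

lemma norm_gphi_sub_smul_le (hτ : τ ≠ 0) (x y : EuclideanSpace ℝ (Fin d)) :
    ‖gphi d τ (x - y) • (y - x)‖ ≤ (1 + 2 * τ ^ 2) * gphi d τ 0 := by
  rw [norm_smul, Real.norm_of_nonneg (gphi_pos hτ _).le, norm_sub_rev, mul_comm]
  exact norm_mul_gphi_le hτ _

lemma norm_gphi_sub_smul_rankOne_sub_id_le (hτ : τ ≠ 0) (x y : EuclideanSpace ℝ (Fin d)) :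
    ‖gphi d τ (x - y) • ((τ ^ 2)⁻¹ • rankOne ℝ (y - x) (y - x) -
      ContinuousLinearMap.id ℝ (EuclideanSpace ℝ (Fin d)))‖ ≤ 3 * gphi d τ 0 := by
  have hg := gphi_pos (d := d) hτ (x - y)
  have hsq := sq_norm_mul_gphi_le hτ (x - y)
  have hle := gphi_le_gphi_zero hτ (x - y)
  calc _ ≤ gphi d τ (x - y) * ((τ ^ 2)⁻¹ * ‖x - y‖ ^ 2 + 1) := by
        rw [norm_smul, Real.norm_of_nonneg hg.le]
        refine mul_le_mul_of_nonneg_left ((norm_sub_le _ _).trans (add_le_add ?_ ?_)) hg.le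
        · rw [norm_smul, norm_rankOne, norm_sub_rev, Real.norm_of_nonneg (by positivity)]
          exact le_of_eq (by ring)
        · exact ContinuousLinearMap.norm_id_le
    _ = (τ ^ 2)⁻¹ * (‖x - y‖ ^ 2 * gphi d τ (x - y)) + gphi d τ (x - y) := by ring
    _ ≤ (τ ^ 2)⁻¹ * (2 * τ ^ 2 * gphi d τ 0) + gphi d τ 0 := by gcongr
    _ = 3 * gphi d τ 0 := by field_simp; ring

lemma hasFDerivAt_gphi_sub_smul_sub (x y : EuclideanSpace ℝ (Fin d)) :
    HasFDerivAt (fun x => gphi d τ (x - y) • (y - x))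
      (gphi d τ (x - y) • ((τ ^ 2)⁻¹ • rankOne ℝ (y - x) (y - x) -
        ContinuousLinearMap.id ℝ (EuclideanSpace ℝ (Fin d)))) x := by
  refine ((hasFDerivAt_gphi_sub x y).smul ((hasFDerivAt_id x).const_sub y)).congr_fderiv ?_
  refine ContinuousLinearMap.ext fun v => ?_
  simp only [add_apply, smul_apply, neg_apply, ContinuousLinearMap.smulRight_apply,
    innerSL_apply_apply, sub_apply, rankOne_apply, ContinuousLinearMap.id_apply, id,
    real_inner_smul_left]
  module

end Gaussian

section Density

variable {d : ℕ} {τ : ℝ} {ν : Measure (EuclideanSpace ℝ (Fin d))} [IsFiniteMeasure ν]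

lemma integrable_gphi_sub (hτ : τ ≠ 0) (x : EuclideanSpace ℝ (Fin d)) :
    Integrable (fun y => gphi d τ (x - y)) ν :=
  .of_bound (by fun_prop) _ (ae_of_all _ fun y => by
    rw [Real.norm_of_nonneg (gphi_pos hτ _).le]; exact gphi_le_gphi_zero hτ _)

lemma integrable_gphi_sub_smul_sub (hτ : τ ≠ 0) (x : EuclideanSpace ℝ (Fin d)) :
    Integrable (fun y => gphi d τ (x - y) • (y - x)) ν :=
  .of_bound (by fun_prop) _ (ae_of_all _ fun y => norm_gphi_sub_smul_le hτ x y)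

lemma integrable_gphi_sub_smul_rankOne (hτ : τ ≠ 0) (x : EuclideanSpace ℝ (Fin d)) :
    Integrable (fun y => gphi d τ (x - y) • rankOne ℝ (y - x) (y - x)) ν :=
  .of_bound (by fun_prop) _ (ae_of_all _ fun y => by
    rw [norm_smul, norm_rankOne, Real.norm_of_nonneg (gphi_pos hτ _).le, norm_sub_rev, ← sq,
      mul_comm]
    exact sq_norm_mul_gphi_le hτ _)

lemma pdens_pos [NeZero ν] (hτ : τ ≠ 0) (x : EuclideanSpace ℝ (Fin d)) : 0 < pdens d τ ν x := by
  rw [pdens, integral_pos_iff_support_of_nonneg (fun y => (gphi_pos hτ _).le)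
    (integrable_gphi_sub hτ x)]
  simp [Function.support, (gphi_pos hτ _).ne', NeZero.ne ν]

lemma hasFDerivAt_pdens (hτ : τ ≠ 0) (x : EuclideanSpace ℝ (Fin d)) :
    HasFDerivAt (pdens d τ ν)
      ((τ ^ 2)⁻¹ • innerSL ℝ (∫ y, gphi d τ (x - y) • (y - x) ∂ν)) x := by
  have h := hasFDerivAt_integral_of_dominated_of_fderiv_le (μ := ν) (x₀ := x)
    (F' := fun x y => (τ ^ 2)⁻¹ • innerSL ℝ (gphi d τ (x - y) • (y - x)))
    (bound := fun _ => |(τ ^ 2)⁻¹| * ((1 + 2 * τ ^ 2) * gphi d τ 0)) Filter.univ_mem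
    (Filter.Eventually.of_forall fun x => by fun_prop) (integrable_gphi_sub hτ x)
    (by fun_prop)
    (ae_of_all _ fun y x _ => by
      rw [norm_smul, innerSL_apply_norm, Real.norm_eq_abs]
      exact mul_le_mul_of_nonneg_left (norm_gphi_sub_smul_le hτ x y) (abs_nonneg _))
    (integrable_const _) (ae_of_all _ fun y x _ => hasFDerivAt_gphi_sub x y)
  rwa [integral_smul, (innerSL ℝ).integral_comp_commSL (by simp)
    (integrable_gphi_sub_smul_sub hτ x)] at h

lemma hasFDerivAt_integral_gphi_sub_smul_sub (hτ : τ ≠ 0) (x : EuclideanSpace ℝ (Fin d)) :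
    HasFDerivAt (fun x => ∫ y, gphi d τ (x - y) • (y - x) ∂ν)
      (∫ y, gphi d τ (x - y) • ((τ ^ 2)⁻¹ • rankOne ℝ (y - x) (y - x) -
        ContinuousLinearMap.id ℝ (EuclideanSpace ℝ (Fin d))) ∂ν) x :=
  hasFDerivAt_integral_of_dominated_of_fderiv_le (bound := fun _ => 3 * gphi d τ 0)
    Filter.univ_mem (Filter.Eventually.of_forall fun x => by fun_prop)
    (integrable_gphi_sub_smul_sub hτ x) (by fun_prop)
    (ae_of_all _ fun y x _ => norm_gphi_sub_smul_rankOne_sub_id_le hτ x y)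
    (integrable_const _) (ae_of_all _ fun y x _ => hasFDerivAt_gphi_sub_smul_sub x y)

lemma score_eq [NeZero ν] (hτ : τ ≠ 0) (x : EuclideanSpace ℝ (Fin d)) :
    score d τ ν x = (τ ^ 2)⁻¹ • (pdens d τ ν x)⁻¹ • ∫ y, gphi d τ (x - y) • (y - x) ∂ν := by
  refine HasGradientAt.gradient ?_
  rw [hasGradientAt_iff_hasFDerivAt]
  refine ((hasFDerivAt_pdens hτ x).log (pdens_pos hτ x).ne').congr_fderiv ?_
  ext v
  simp
  ring

end Density

section Posterior

variable {d : ℕ} {τ : ℝ} {ν : Measure (EuclideanSpace ℝ (Fin d))}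

/-- The posterior of `Y ~ ν` given `Y + τZ = x`: `ν` reweighted by the likelihood `φ(x - ·)`. -/
noncomputable def posterior (d : ℕ) (τ : ℝ) (ν : Measure (EuclideanSpace ℝ (Fin d)))
    (x : EuclideanSpace ℝ (Fin d)) : Measure (EuclideanSpace ℝ (Fin d)) :=
  ν.tilted fun y => Real.log (gphi d τ (x - y))

variable {F : Type*} [NormedAddCommGroup F] [NormedSpace ℝ F]

lemma integral_posterior (hτ : τ ≠ 0) (x : EuclideanSpace ℝ (Fin d))
    (g : EuclideanSpace ℝ (Fin d) → F) :
    ∫ y, g y ∂posterior d τ ν x = (pdens d τ ν x)⁻¹ • ∫ y, gphi d τ (x - y) • g y ∂ν := by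
  simp_rw [posterior, integral_tilted, Real.exp_log (gphi_pos hτ _), ← integral_smul, smul_smul,
    div_eq_inv_mul]
  rfl

variable [IsFiniteMeasure ν]

lemma integrable_exp_log_gphi_sub (hτ : τ ≠ 0) (x : EuclideanSpace ℝ (Fin d)) :
    Integrable (fun y => Real.exp (Real.log (gphi d τ (x - y)))) ν := by
  simpa only [Real.exp_log (gphi_pos hτ _)] using integrable_gphi_sub hτ x

lemma integrable_posterior_iff (hτ : τ ≠ 0) (x : EuclideanSpace ℝ (Fin d))
    (g : EuclideanSpace ℝ (Fin d) → F) :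
    Integrable g (posterior d τ ν x) ↔ Integrable (fun y => gphi d τ (x - y) • g y) ν := by
  rw [posterior, integrable_tilted_iff (integrable_exp_log_gphi_sub hτ x)]
  simp_rw [Real.exp_log (gphi_pos hτ _)]

lemma isProbabilityMeasure_posterior [NeZero ν] (hτ : τ ≠ 0) (x : EuclideanSpace ℝ (Fin d)) :
    IsProbabilityMeasure (posterior d τ ν x) :=
  isProbabilityMeasure_tilted (integrable_exp_log_gphi_sub hτ x)

noncomputable def posteriorCov (d : ℕ) (τ : ℝ) (ν : Measure (EuclideanSpace ℝ (Fin d)))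
    (x : EuclideanSpace ℝ (Fin d)) : EuclideanSpace ℝ (Fin d) →L[ℝ] EuclideanSpace ℝ (Fin d) :=
  ∫ y, rankOne ℝ (y - x) (y - x) ∂posterior d τ ν x -
    rankOne ℝ (∫ y, y - x ∂posterior d τ ν x) (∫ y, y - x ∂posterior d τ ν x)

lemma integral_gphi_sub_smul_eq [NeZero ν] (hτ : τ ≠ 0) (x : EuclideanSpace ℝ (Fin d))
    (g : EuclideanSpace ℝ (Fin d) → F) :
    ∫ y, gphi d τ (x - y) • g y ∂ν = pdens d τ ν x • ∫ y, g y ∂posterior d τ ν x := by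
  rw [integral_posterior hτ, smul_inv_smul₀ (pdens_pos hτ x).ne']

lemma hasFDerivAt_score [NeZero ν] (hτ : τ ≠ 0) (x : EuclideanSpace ℝ (Fin d)) :
    HasFDerivAt (score d τ ν) ((τ ^ 4)⁻¹ • posteriorCov d τ ν x -
      (τ ^ 2)⁻¹ • ContinuousLinearMap.id ℝ (EuclideanSpace ℝ (Fin d))) x := by
  have hP := pdens_pos (ν := ν) hτ x
  have := isProbabilityMeasure_posterior (ν := ν) hτ x
  have hinv := (hasDerivAt_inv hP.ne').comp_hasFDerivAt x (hasFDerivAt_pdens hτ x)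
  have h := (hinv.smul (hasFDerivAt_integral_gphi_sub_smul_sub (ν := ν) hτ x)).const_smul
    (τ ^ 2)⁻¹
  rw [show score d τ ν = _ from funext (score_eq hτ)]
  refine h.congr_fderiv ?_
  have hC : Integrable (fun y => (τ ^ 2)⁻¹ • rankOne ℝ (y - x) (y - x)) (posterior d τ ν x) :=
    ((integrable_posterior_iff hτ x _).2 (integrable_gphi_sub_smul_rankOne hτ x)).fun_smul _
  rw [integral_gphi_sub_smul_eq hτ x (fun y => y - x),
    integral_gphi_sub_smul_eq hτ x (fun y => (τ ^ 2)⁻¹ • rankOne ℝ (y - x) (y - x) -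
      ContinuousLinearMap.id ℝ (EuclideanSpace ℝ (Fin d))),
    integral_sub hC (integrable_const _), integral_smul, integral_const, probReal_univ, one_smul]
  refine ContinuousLinearMap.ext fun v => ?_
  simp only [Function.comp_apply, posteriorCov, add_apply, smul_apply, sub_apply,
    ContinuousLinearMap.smulRight_apply, innerSL_apply_apply, rankOne_apply,
    ContinuousLinearMap.id_apply, real_inner_smul_left, smul_eq_mul]
  match_scalars <;> field_simp

end Posterior

section BoundedSupport

variable {d : ℕ} {τ R : ℝ} {ν : Measure (EuclideanSpace ℝ (Fin d))} [IsFiniteMeasure ν] [NeZero ν]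

lemma sq_norm_le_of_forall_abs_le {y : EuclideanSpace ℝ (Fin d)} (hy : ∀ i, |y i| ≤ R) :
    ‖y‖ ^ 2 ≤ R ^ 2 * d := by
  rw [EuclideanSpace.norm_sq_eq]
  calc ∑ i, ‖y i‖ ^ 2 ≤ ∑ _i : Fin d, R ^ 2 :=
        Finset.sum_le_sum fun i _ => by
          rw [Real.norm_eq_abs]; exact pow_le_pow_left₀ (abs_nonneg _) (hy i) 2
    _ = R ^ 2 * d := by simp [mul_comm]

lemma norm_posteriorCov_le (hτ : τ ≠ 0) (hsupp : ∀ᵐ y ∂ν, ∀ i, |y i| ≤ R)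
    (x : EuclideanSpace ℝ (Fin d)) : ‖posteriorCov d τ ν x‖ ≤ R ^ 2 * d := by
  have := isProbabilityMeasure_posterior (ν := ν) hτ x
  have hae : ∀ᵐ y ∂posterior d τ ν x, ‖y‖ ^ 2 ≤ R ^ 2 * d :=
    (tilted_absolutelyContinuous _ _).ae_le (hsupp.mono fun y hy => sq_norm_le_of_forall_abs_le hy)
  have hmem : MemLp (fun y => y - x) 2 (posterior d τ ν x) :=
    .of_bound (by fun_prop) (√(R ^ 2 * d) + ‖x‖) (hae.mono fun y hy =>
      (norm_sub_le y x).trans (add_le_add_left (Real.le_sqrt_of_sq_le hy) _))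
  calc ‖posteriorCov d τ ν x‖ ≤ ∫ y, ‖(y - x) - (-x)‖ ^ 2 ∂posterior d τ ν x :=
        norm_integral_rankOne_sub_rankOne_integral_le hmem (-x)
    _ ≤ ∫ _y, R ^ 2 * d ∂posterior d τ ν x := by
        refine integral_mono_ae ?_ (integrable_const _) (hae.mono fun y hy => by simpa using hy)
        simpa using (hmem.add (memLp_const x)).integrable_norm_pow two_ne_zero
    _ = R ^ 2 * d := by simp

lemma norm_jacobian_le (hτ : τ ≠ 0) (hsupp : ∀ᵐ y ∂ν, ∀ i, |y i| ≤ R)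
    (x : EuclideanSpace ℝ (Fin d)) :
    ‖(τ ^ 4)⁻¹ • posteriorCov d τ ν x - (τ ^ 2)⁻¹ • ContinuousLinearMap.id ℝ _‖ ≤
      1 / τ ^ 2 + R ^ 2 * d / τ ^ 4 := by
  calc _ ≤ (τ ^ 4)⁻¹ * ‖posteriorCov d τ ν x‖ + (τ ^ 2)⁻¹ * 1 := by
        refine (norm_sub_le _ _).trans (add_le_add ?_ ?_) <;>
          rw [norm_smul, Real.norm_of_nonneg (by positivity)]
        exact mul_le_mul_of_nonneg_left ContinuousLinearMap.norm_id_le (by positivity)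
    _ ≤ (τ ^ 4)⁻¹ * (R ^ 2 * d) + (τ ^ 2)⁻¹ * 1 := by
        gcongr; exact norm_posteriorCov_le hτ hsupp x
    _ = 1 / τ ^ 2 + R ^ 2 * d / τ ^ 4 := by ring

end BoundedSupport

theorem stmt3_general (d : ℕ) (τ R : ℝ) (hτ : 0 < τ)
    (ν : Measure (EuclideanSpace ℝ (Fin d))) [IsProbabilityMeasure ν]
    (hsupp : ∀ᵐ y ∂ν, ∀ i, |y i| ≤ R) :
    LipschitzWith (Real.toNNReal (1 / τ ^ 2 + R ^ 2 * d / τ ^ 4)) (score d τ ν) ∧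
    ∀ x, ‖fderiv ℝ (score d τ ν) x‖ ≤ 1 / τ ^ 2 + R ^ 2 * d / τ ^ 4 := by
  have hderiv := hasFDerivAt_score (ν := ν) hτ.ne'
  have hbound : ∀ x, ‖fderiv ℝ (score d τ ν) x‖ ≤ 1 / τ ^ 2 + R ^ 2 * d / τ ^ 4 := fun x => by
    rw [(hderiv x).fderiv]
    exact norm_jacobian_le hτ.ne' hsupp x
  refine ⟨lipschitzWith_of_nnnorm_fderiv_le (fun x => (hderiv x).differentiableAt) fun x => ?_,
    hbound⟩
  rw [← norm_toNNReal]
  exact Real.toNNReal_mono (hbound x)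

/-- The score of a smoothed measure supported in `[-R,R]^d` is globally Lipschitz with constant
`1/τ² + R²d/τ⁴`, and the operator norm of its Jacobian obeys the same bound. -/
theorem stmt3 (d : ℕ) (hd : 1 ≤ d) (τ R : ℝ) (hτ : 0 < τ) (hR : 0 < R)
    (ν : Measure (EuclideanSpace ℝ (Fin d))) [IsProbabilityMeasure ν]
    (hsupp : ∀ᵐ y ∂ν, ∀ i, |y i| ≤ R) :
    LipschitzWith (Real.toNNReal (1 / τ ^ 2 + R ^ 2 * d / τ ^ 4)) (score d τ ν) ∧
    ∀ x, ‖fderiv ℝ (score d τ ν) x‖ ≤ 1 / τ ^ 2 + R ^ 2 * d / τ ^ 4 :=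
  stmt3_general d τ R hτ ν hsupp
end

section
/- Let V be a nonempty finite set and for each y ∈ V let W(·|y) be a probability measure on a measurable space X. Let Q := (1/|V|) Σ_{y∈V} W(·|y), assume each W(·|y) ≪ Q with ι(y,x) := log (dW(·|y)/dQ)(x), let Y be uniform on V and, conditionally on Y, X ∼ W(·|Y). Suppose there exist m ∈ ℝ, a real D ≥ 1, and c > 0 such that P[ ι(Y,X) − m ≥ t ] ≤ 2 exp(−c min{t²/D, t}) for all t ≥ 0. Let n ≥ 1, let Y₁,…,Y_n be i.i.d. uniform on V, and let P_n := (1/n) Σ_{i=1}^n W(·|Y_i). Then for every a ≥ 0, setting t := max{log n − m − a, 0}, one has E[ KL(P_n ‖ Q) ] ≤ e^{−a} + 2 log(1+|V|) · exp(−c min{t²/D, t}). -/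
/-!
Let `ρ = dPₙ/dQ = n⁻¹ ∑ⱼ dW(·|Yⱼ)/dQ`. Since `∑_y dW(·|y)/dQ = |V|`, we have `ρ ≤ |V|`, and
`KL(Pₙ‖Q) = n⁻¹ ∑ᵢ ∫ log ρ dW(·|Yᵢ)`. Fix a threshold `r`. Where `ι(Yᵢ, ·) ≥ r` we use
`log ρ ≤ log (1 + |V|)`; elsewhere `log ρ ≤ ρ - 1 = n⁻¹ ∑ⱼ (dW(·|Yⱼ)/dQ - 1)`. After averaging
over the codebook, the terms with `j ≠ i` vanish because `∑_z (dW(·|z)/dQ - 1) = 0`, and each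
diagonal term is at most `e^r`, because `dW(·|y)/dQ < e^r` on that set. Hence
`E KL(Pₙ‖Q) ≤ e^r / n + log (1 + |V|) · P[ι(Y, X) ≥ r]`. Take `r = log n - a`: if
`log n - m - a ≥ 0` then `r = m + t` and the tail bound applies; otherwise `t = 0` and the
trivial bound `1` on the probability suffices.
-/

open MeasureTheory
open scoped ENNReal

/-- Kullback–Leibler divergence `∫ log(dP/dQ) dP`. -/
noncomputable def KL {X : Type*} [MeasurableSpace X] (P Q : Measure X) : ℝ :=
  ∫ x, Real.log ((P.rnDeriv Q x).toReal) ∂P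

open Finset

section PiSums
variable {ι V M : Type*} [Fintype ι] [DecidableEq ι] [Fintype V] [AddCommMonoid M]

lemma Fintype.sum_pi_apply (F : V → M) (i : ι) :
    ∑ ys : ι → V, F (ys i) = Fintype.card V ^ (Fintype.card ι - 1) • ∑ y, F y := by
  simpa [Fintype.piFinset_univ] using Fintype.sum_piFinset_apply F univ i

lemma Fintype.sum_pi_apply_apply_eq_zero {i j : ι} (hij : i ≠ j) (A : V → V → M)
    (hA : ∀ y, ∑ z, A y z = 0) : ∑ ys : ι → V, A (ys i) (ys j) = 0 := by
  rw [Fintype.sum_equiv (Equiv.piSplitAt j fun _ => V) (fun ys => A (ys i) (ys j))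
    (fun p => A (p.2 ⟨i, hij⟩) p.1) (fun _ => rfl), Fintype.sum_prod_type, Finset.sum_comm]
  simp [hA]

lemma Fintype.sum_pi_sum_sum_apply_apply (A : V → V → M) (hA : ∀ y, ∑ z, A y z = 0) :
    ∑ ys : ι → V, ∑ i, ∑ j, A (ys i) (ys j)
      = (Fintype.card ι * Fintype.card V ^ (Fintype.card ι - 1)) • ∑ y, A y y := by
  rw [Finset.sum_comm]
  have hdiag (i : ι) : ∑ ys : ι → V, ∑ j, A (ys i) (ys j) = ∑ ys : ι → V, A (ys i) (ys i) := by
    rw [Finset.sum_comm, Finset.sum_eq_single i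
      (fun j _ hji => Fintype.sum_pi_apply_apply_eq_zero (Ne.symm hji) A hA) (by simp)]
  simp only [hdiag, Fintype.sum_pi_apply (fun y => A y y), sum_const, card_univ, mul_smul]

end PiSums

section Mixture
variable {X ι : Type*} [MeasurableSpace X]

lemma MeasureTheory.Measure.rnDeriv_finsetSum (ν : Measure X) [SigmaFinite ν] (s : Finset ι)
    (μ : ι → Measure X) [∀ i, IsFiniteMeasure (μ i)] :
    (∑ i ∈ s, μ i).rnDeriv ν =ᵐ[ν] ∑ i ∈ s, (μ i).rnDeriv ν := by
  classical
  induction s using Finset.induction with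
  | empty => simp
  | insert b s hb ih =>
    rw [sum_insert hb, sum_insert hb]
    exact (Measure.rnDeriv_add _ _ ν).trans (ih.add_left)

variable [Fintype ι]

lemma toReal_rnDeriv_smul_sum (ν : Measure X) [SigmaFinite ν] (μ : ι → Measure X)
    [∀ i, IsFiniteMeasure (μ i)] {c : ℝ≥0∞} (hc : c ≠ ∞) :
    ∀ᵐ x ∂ν, ((c • ∑ i, μ i).rnDeriv ν x).toReal = c.toReal * ∑ i, ((μ i).rnDeriv ν x).toReal := by
  filter_upwards [Measure.rnDeriv_smul_left_of_ne_top (∑ i, μ i) ν hc,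
    Measure.rnDeriv_finsetSum ν univ μ, ae_all_iff.2 fun i => (μ i).rnDeriv_lt_top ν]
    with x hsmul hsum hfin
  rw [hsmul, Pi.smul_apply, hsum, Finset.sum_apply, smul_eq_mul, ENNReal.toReal_mul,
    ENNReal.toReal_sum fun i _ => (hfin i).ne]

lemma isProbabilityMeasure_inv_card_smul_sum [Nonempty ι] (μ : ι → Measure X)
    [∀ i, IsProbabilityMeasure (μ i)] :
    IsProbabilityMeasure ((Fintype.card ι : ℝ≥0∞)⁻¹ • ∑ i, μ i) := by
  constructor
  simp [ENNReal.inv_mul_cancel]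

end Mixture

section Llr
variable {X : Type*} [MeasurableSpace X] {μ ν : Measure X}

lemma integrable_llr_of_ae_toReal_rnDeriv_le [IsFiniteMeasure μ] [IsFiniteMeasure ν]
    (hμν : μ ≪ ν) {C : ℝ} (hC : ∀ᵐ x ∂ν, (μ.rnDeriv ν x).toReal ≤ C) :
    Integrable (llr μ ν) μ := by
  rw [← integrable_rnDeriv_mul_log_iff hμν]
  obtain ⟨B, hB⟩ := (isCompact_Icc (a := 0) (b := C)).exists_bound_of_continuousOn
    Real.continuous_mul_log.continuousOn
  have hmeas : Measurable fun x => (μ.rnDeriv ν x).toReal := (μ.measurable_rnDeriv ν).ennreal_toReal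
  refine Integrable.of_bound (hmeas.mul hmeas.log).aestronglyMeasurable B ?_
  filter_upwards [hC] with x hx using hB _ ⟨ENNReal.toReal_nonneg, hx⟩

end Llr

noncomputable def empiricalMixture {V X ι : Type*} [MeasurableSpace X] [Fintype ι]
    (W : V → Measure X) (ys : ι → V) : Measure X :=
  (Fintype.card ι : ℝ≥0∞)⁻¹ • ∑ i, W (ys i)

noncomputable def crossTerm {V X : Type*} [MeasurableSpace X] (W : V → Measure X)
    (Q : Measure X) (r : ℝ) (y z : V) : ℝ :=
  ∫ x in {x | llr (W y) Q x < r}, ((W z).rnDeriv Q x).toReal - 1 ∂W y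

section Channel
variable {V X ι : Type*} [MeasurableSpace X] {W : V → Measure X} {Q : Measure X}

lemma le_card_smul_empiricalMixture [Fintype ι] [Nonempty ι] (ys : ι → V) (i : ι) :
    W (ys i) ≤ (Fintype.card ι : ℝ≥0∞) • empiricalMixture W ys := by
  rw [empiricalMixture, smul_smul, ENNReal.mul_inv_cancel (by simp) (by simp), one_smul]
  exact single_le_sum (f := fun i => W (ys i)) (fun _ _ => Measure.zero_le _) (mem_univ i)

lemma empiricalMixture_absolutelyContinuous [Fintype ι] (hac : ∀ y, W y ≪ Q) (ys : ι → V) :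
    empiricalMixture W ys ≪ Q :=
  Measure.AbsolutelyContinuous.smul_left
    (Measure.AbsolutelyContinuous.mk fun s _ hs => by simp [fun i => hac (ys i) hs]) _

variable [∀ y, IsProbabilityMeasure (W y)]

instance [Fintype ι] [Nonempty ι] (ys : ι → V) : IsProbabilityMeasure (empiricalMixture W ys) :=
  isProbabilityMeasure_inv_card_smul_sum _

lemma toReal_rnDeriv_empiricalMixture [Fintype ι] [Nonempty ι] [SigmaFinite Q] (ys : ι → V) :
    ∀ᵐ x ∂Q, ((empiricalMixture W ys).rnDeriv Q x).toReal
      = (Fintype.card ι : ℝ)⁻¹ * ∑ i, ((W (ys i)).rnDeriv Q x).toReal := by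
  filter_upwards [toReal_rnDeriv_smul_sum Q (fun i => W (ys i)) (c := (Fintype.card ι : ℝ≥0∞)⁻¹)
    (by simp)] with x hx
  rw [empiricalMixture, hx, ENNReal.toReal_inv, ENNReal.toReal_natCast]

lemma ae_toReal_rnDeriv_empiricalMixture_pos [Fintype ι] [Nonempty ι] [SigmaFinite Q]
    (hac : ∀ y, W y ≪ Q) (ys : ι → V) (i : ι) :
    ∀ᵐ x ∂W (ys i), 0 < ((empiricalMixture W ys).rnDeriv Q x).toReal := by
  have hP := empiricalMixture_absolutelyContinuous hac ys
  have hWP : W (ys i) ≪ empiricalMixture W ys :=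
    Measure.absolutelyContinuous_of_le_smul (le_card_smul_empiricalMixture ys i)
  filter_upwards [hWP.ae_le (Measure.rnDeriv_pos hP),
    (hac (ys i)).ae_le (Measure.rnDeriv_lt_top (empiricalMixture W ys) Q)] with x hpos hfin
  exact ENNReal.toReal_pos hpos.ne' hfin.ne

variable [Fintype V] [Nonempty V] (hQ : Q = empiricalMixture W id)
include hQ

lemma ae_sum_toReal_rnDeriv_eq_card :
    ∀ᵐ x ∂Q, ∑ y, ((W y).rnDeriv Q x).toReal = Fintype.card V := by
  have : IsProbabilityMeasure Q := hQ ▸ inferInstance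
  have hpos : (0 : ℝ) < Fintype.card V := Nat.cast_pos.2 Fintype.card_pos
  filter_upwards [toReal_rnDeriv_empiricalMixture (W := W) (Q := Q) id, Measure.rnDeriv_self Q]
    with x hx hself
  rw [← hQ, hself, ENNReal.toReal_one] at hx
  field_simp at hx
  simpa using hx.symm

lemma ae_toReal_rnDeriv_le_card :
    ∀ᵐ x ∂Q, ∀ y, ((W y).rnDeriv Q x).toReal ≤ Fintype.card V := by
  filter_upwards [ae_sum_toReal_rnDeriv_eq_card hQ] with x hx y
  exact hx ▸ single_le_sum (f := fun y => ((W y).rnDeriv Q x).toReal)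
    (fun _ _ => ENNReal.toReal_nonneg) (mem_univ y)

lemma ae_toReal_rnDeriv_empiricalMixture_le_card [Fintype ι] [Nonempty ι] (ys : ι → V) :
    ∀ᵐ x ∂Q, ((empiricalMixture W ys).rnDeriv Q x).toReal ≤ Fintype.card V := by
  have : IsProbabilityMeasure Q := hQ ▸ inferInstance
  filter_upwards [toReal_rnDeriv_empiricalMixture (W := W) ys, ae_toReal_rnDeriv_le_card hQ]
    with x hx hle
  rw [hx, inv_mul_le_iff₀ (by simp [Fintype.card_pos])]
  simpa using sum_le_card_nsmul univ _ _ fun i _ => hle (ys i)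

variable (hac : ∀ y, W y ≪ Q)
include hac

lemma integrable_llr_empiricalMixture [Fintype ι] [Nonempty ι] (ys : ι → V) (i : ι) :
    Integrable (llr (empiricalMixture W ys) Q) (W (ys i)) := by
  have : IsProbabilityMeasure Q := hQ ▸ inferInstance
  exact ((integrable_llr_of_ae_toReal_rnDeriv_le (empiricalMixture_absolutelyContinuous hac ys)
    (ae_toReal_rnDeriv_empiricalMixture_le_card hQ ys)).smul_measure (by simp)).mono_measure
    (le_card_smul_empiricalMixture ys i)

lemma integrable_toReal_rnDeriv (y z : V) :
    Integrable (fun x => ((W z).rnDeriv Q x).toReal) (W y) := by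
  refine Integrable.of_bound ((W z).measurable_rnDeriv Q).ennreal_toReal.aestronglyMeasurable
    (Fintype.card V) ?_
  filter_upwards [(hac y).ae_le (ae_toReal_rnDeriv_le_card hQ)] with x hx
  rw [Real.norm_of_nonneg ENNReal.toReal_nonneg]
  exact hx z

lemma sum_crossTerm_eq_zero (r : ℝ) (y : V) : ∑ z, crossTerm W Q r y z = 0 := by
  simp only [crossTerm]
  have hint (z : V) :
      IntegrableOn (fun x => ((W z).rnDeriv Q x).toReal - 1) {x | llr (W y) Q x < r} (W y) :=
    ((integrable_toReal_rnDeriv hQ hac y z).sub (integrable_const 1)).integrableOn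
  rw [← integral_finsetSum _ fun z _ => hint z]
  refine (integral_congr_ae (ae_restrict_of_ae ?_)).trans (integral_zero _ _)
  filter_upwards [(hac y).ae_le (ae_sum_toReal_rnDeriv_eq_card hQ)] with x hx
  simp [sum_sub_distrib, hx]

lemma crossTerm_self_le (r : ℝ) (y : V) : crossTerm W Q r y y ≤ Real.exp r := by
  have hs : MeasurableSet {x | llr (W y) Q x < r} :=
    measurableSet_lt (measurable_llr _ _) measurable_const
  calc crossTerm W Q r y y ≤ ∫ _ in {x | llr (W y) Q x < r}, Real.exp r ∂W y := by
        refine setIntegral_mono_on ((integrable_toReal_rnDeriv hQ hac y y).sub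
          (integrable_const 1)).integrableOn (integrable_const _).integrableOn hs fun x hx => ?_
        have := (Real.le_exp_log ((W y).rnDeriv Q x).toReal).trans (Real.exp_le_exp.2 hx.le)
        linarith
    _ = (W y).real {x | llr (W y) Q x < r} * Real.exp r := setIntegral_const _
    _ ≤ Real.exp r := mul_le_of_le_one_left (Real.exp_pos r).le measureReal_le_one

lemma integral_llr_empiricalMixture_le [Fintype ι] [Nonempty ι] (ys : ι → V) (i : ι) (r : ℝ) :
    ∫ x, llr (empiricalMixture W ys) Q x ∂W (ys i)
      ≤ (Fintype.card ι : ℝ)⁻¹ * ∑ j, crossTerm W Q r (ys i) (ys j)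
        + Real.log (1 + Fintype.card V) * (W (ys i)).real {x | r ≤ llr (W (ys i)) Q x} := by
  have : IsProbabilityMeasure Q := hQ ▸ inferInstance
  set P := empiricalMixture W ys
  set s := {x | llr (W (ys i)) Q x < r}
  have hs : MeasurableSet s := measurableSet_lt (measurable_llr _ _) measurable_const
  have hsc : sᶜ = {x | r ≤ llr (W (ys i)) Q x} := by ext; simp [s]
  have hN : (Fintype.card ι : ℝ) ≠ 0 := by simp
  have hdens := (hac (ys i)).ae_le (toReal_rnDeriv_empiricalMixture (W := W) ys)
  have hle := (hac (ys i)).ae_le (ae_toReal_rnDeriv_empiricalMixture_le_card hQ ys)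
  have hpos := ae_toReal_rnDeriv_empiricalMixture_pos hac ys i
  have hcross (j : ι) : Integrable (fun x => ((W (ys j)).rnDeriv Q x).toReal - 1) (W (ys i)) :=
    (integrable_toReal_rnDeriv hQ hac (ys i) (ys j)).sub (integrable_const 1)
  have hlow : ∫ x in s, llr P Q x ∂W (ys i)
      ≤ (Fintype.card ι : ℝ)⁻¹ * ∑ j, crossTerm W Q r (ys i) (ys j) := by
    simp only [crossTerm]
    rw [← integral_finsetSum _ fun j _ => (hcross j).integrableOn, ← integral_const_mul]
    refine setIntegral_mono_on_ae (integrable_llr_empiricalMixture hQ hac ys i).integrableOn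
      ((integrable_finsetSum _ fun j _ => hcross j).const_mul _).integrableOn hs ?_
    filter_upwards [hdens, hpos] with x hx hxpos _
    refine (Real.log_le_sub_one_of_pos hxpos).trans_eq ?_
    rw [hx, sum_sub_distrib, mul_sub]
    simp [hN]
  have hhigh : ∫ x in sᶜ, llr P Q x ∂W (ys i)
      ≤ Real.log (1 + Fintype.card V) * (W (ys i)).real {x | r ≤ llr (W (ys i)) Q x} := by
    rw [← hsc, mul_comm, ← smul_eq_mul, ← setIntegral_const]
    refine setIntegral_mono_on_ae (integrable_llr_empiricalMixture hQ hac ys i).integrableOn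
      (integrable_const _).integrableOn hs.compl ?_
    filter_upwards [hle, hpos] with x hx hxpos _
    exact Real.log_le_log hxpos (by linarith)
  rw [← integral_add_compl hs (integrable_llr_empiricalMixture hQ hac ys i)]
  exact add_le_add hlow hhigh

lemma KL_empiricalMixture_le [Fintype ι] [Nonempty ι] (ys : ι → V) (r : ℝ) :
    KL (empiricalMixture W ys) Q
      ≤ ((Fintype.card ι : ℝ) ^ 2)⁻¹ * ∑ i, ∑ j, crossTerm W Q r (ys i) (ys j)
        + Real.log (1 + Fintype.card V)
          * ((Fintype.card ι : ℝ)⁻¹ * ∑ i, (W (ys i)).real {x | r ≤ llr (W (ys i)) Q x}) := by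
  have hdecomp : KL (empiricalMixture W ys) Q
      = (Fintype.card ι : ℝ)⁻¹ * ∑ i, ∫ x, llr (empiricalMixture W ys) Q x ∂W (ys i) := by
    calc KL (empiricalMixture W ys) Q
        = ∫ x, llr (empiricalMixture W ys) Q x ∂((Fintype.card ι : ℝ≥0∞)⁻¹ • ∑ i, W (ys i)) := rfl
      _ = _ := by
        rw [integral_smul_measure,
          integral_finsetSum_measure fun i _ => integrable_llr_empiricalMixture hQ hac ys i]
        simp
  rw [hdecomp]
  calc _ ≤ (Fintype.card ι : ℝ)⁻¹
        * ∑ i, ((Fintype.card ι : ℝ)⁻¹ * ∑ j, crossTerm W Q r (ys i) (ys j)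
          + Real.log (1 + Fintype.card V) * (W (ys i)).real {x | r ≤ llr (W (ys i)) Q x}) := by
        gcongr with i
        exact integral_llr_empiricalMixture_le hQ hac ys i r
    _ = _ := by simp only [sum_add_distrib, mul_add, ← mul_sum]; ring

theorem avg_KL_empiricalMixture_le [Fintype ι] [Nonempty ι] [DecidableEq ι] (r : ℝ) :
    (Fintype.card V : ℝ)⁻¹ ^ Fintype.card ι * ∑ ys : ι → V, KL (empiricalMixture W ys) Q
      ≤ Real.exp r / Fintype.card ι + Real.log (1 + Fintype.card V)
          * ((Fintype.card V : ℝ)⁻¹ * ∑ y, (W y).real {x | r ≤ llr (W y) Q x}) := by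
  set K : ℝ := (Fintype.card V : ℝ)
  set N : ℝ := (Fintype.card ι : ℝ)
  have hK : 0 < K := Nat.cast_pos.2 Fintype.card_pos
  have hN : 0 < N := Nat.cast_pos.2 Fintype.card_pos
  have hKpow : K⁻¹ ^ Fintype.card ι * K ^ (Fintype.card ι - 1) = K⁻¹ := by
    obtain ⟨p, hp⟩ := Nat.exists_eq_add_of_lt (Fintype.card_pos (α := ι))
    rw [hp, zero_add, Nat.add_sub_cancel, pow_succ, mul_right_comm, ← mul_pow,
      inv_mul_cancel₀ hK.ne', one_pow, one_mul]
  have hcross := Fintype.sum_pi_sum_sum_apply_apply (ι := ι) (crossTerm W Q r)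
    (sum_crossTerm_eq_zero hQ hac r)
  have htail : ∑ ys : ι → V, ∑ i, (W (ys i)).real {x | r ≤ llr (W (ys i)) Q x}
      = (Fintype.card ι * Fintype.card V ^ (Fintype.card ι - 1))
          • ∑ y, (W y).real {x | r ≤ llr (W y) Q x} := by
    rw [sum_comm]
    simp [Fintype.sum_pi_apply (fun y => (W y).real {x | r ≤ llr (W y) Q x}), mul_smul]
  have hdiag : ∑ y, crossTerm W Q r y y ≤ K * Real.exp r := by
    simpa using sum_le_card_nsmul univ _ _ fun y _ => crossTerm_self_le hQ hac r y
  calc K⁻¹ ^ Fintype.card ι * ∑ ys : ι → V, KL (empiricalMixture W ys) Q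
      ≤ K⁻¹ ^ Fintype.card ι * ∑ ys : ι → V, ((N ^ 2)⁻¹ * ∑ i, ∑ j, crossTerm W Q r (ys i) (ys j)
          + Real.log (1 + K) * (N⁻¹ * ∑ i, (W (ys i)).real {x | r ≤ llr (W (ys i)) Q x})) := by
        gcongr with ys
        exact KL_empiricalMixture_le hQ hac ys r
    _ = N⁻¹ * (K⁻¹ ^ Fintype.card ι * K ^ (Fintype.card ι - 1)) * ∑ y, crossTerm W Q r y y
          + Real.log (1 + K) * ((K⁻¹ ^ Fintype.card ι * K ^ (Fintype.card ι - 1))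
            * ∑ y, (W y).real {x | r ≤ llr (W y) Q x}) := by
        rw [sum_add_distrib, ← mul_sum, ← mul_sum, ← mul_sum, hcross, htail]
        simp only [nsmul_eq_mul, Nat.cast_mul, Nat.cast_pow]
        field_simp
        ring
    _ ≤ Real.exp r / N + Real.log (1 + K) * (K⁻¹ * ∑ y, (W y).real {x | r ≤ llr (W y) Q x}) := by
        rw [hKpow]
        gcongr
        calc N⁻¹ * K⁻¹ * ∑ y, crossTerm W Q r y y ≤ N⁻¹ * K⁻¹ * (K * Real.exp r) := by gcongr
          _ = Real.exp r / N := by field_simp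

end Channel

theorem stmt5_general {V X : Type*} [Fintype V] [Nonempty V] [MeasurableSpace X]
    (W : V → Measure X) [∀ y, IsProbabilityMeasure (W y)]
    (Q : Measure X) (hQdef : Q = (Fintype.card V : ℝ≥0∞)⁻¹ • ∑ y, W y)
    (hac : ∀ y, W y ≪ Q)
    (m D c : ℝ)
    (htail : ∀ t : ℝ, 0 ≤ t →
      (Fintype.card V : ℝ)⁻¹ *
          ∑ y, ((W y) {x | m + t ≤ Real.log (((W y).rnDeriv Q) x).toReal}).toReal
        ≤ 2 * Real.exp (-c * min (t ^ 2 / D) t))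
    (n : ℕ) (hn : 1 ≤ n) (a : ℝ) :
    (Fintype.card V : ℝ)⁻¹ ^ n *
        ∑ ys : Fin n → V, KL ((n : ℝ≥0∞)⁻¹ • ∑ i, W (ys i)) Q
      ≤ Real.exp (-a) +
        2 * Real.log (1 + Fintype.card V) *
          Real.exp (-c * min ((max (Real.log n - m - a) 0) ^ 2 / D)
            (max (Real.log n - m - a) 0)) := by
  have : Nonempty (Fin n) := ⟨⟨0, hn⟩⟩
  have hbound := avg_KL_empiricalMixture_le (ι := Fin n) hQdef hac (Real.log n - a)
  simp only [empiricalMixture, Fintype.card_fin] at hbound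
  rw [Real.exp_sub, Real.exp_log (by positivity), div_div_cancel_left' (by positivity),
    ← Real.exp_neg] at hbound
  refine hbound.trans ?_
  rw [mul_comm 2, mul_assoc]
  refine add_le_add_right (mul_le_mul_of_nonneg_left ?_ (Real.log_nonneg (by simp))) _
  rcases le_or_gt 0 (Real.log n - m - a) with h | h
  · rw [max_eq_left h]
    have hr : m + (Real.log n - m - a) = Real.log n - a := by ring
    simpa only [hr, Measure.real, llr] using htail _ h
  · rw [max_eq_right h.le]
    have hprob :
        (Fintype.card V : ℝ)⁻¹ * ∑ y, (W y).real {x | Real.log n - a ≤ llr (W y) Q x} ≤ 1 := by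
      rw [inv_mul_le_iff₀ (by simp [Fintype.card_pos])]
      simpa using sum_le_card_nsmul univ _ 1 fun y _ => measureReal_le_one
    refine hprob.trans ?_
    norm_num

/-- **Explicit random-codebook KL bound.** Under a two-sided sub-exponential tail for the
log-likelihood ratio `ι(Y,X)` around `m`, the expected KL divergence of the empirical mixture
of `n` i.i.d. uniform draws is bounded by
`e^{-a} + 2 log(1+|V|) exp(−c min{t²/D, t})` with `t := max{log n − m − a, 0}`. -/
theorem stmt5 {V X : Type*} [Fintype V] [Nonempty V] [MeasurableSpace X]
    (W : V → Measure X) [∀ y, IsProbabilityMeasure (W y)]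
    (Q : Measure X) (hQdef : Q = (Fintype.card V : ℝ≥0∞)⁻¹ • ∑ y, W y)
    (hac : ∀ y, W y ≪ Q)
    (m D c : ℝ) (hD : 1 ≤ D) (hc : 0 < c)
    (htail : ∀ t : ℝ, 0 ≤ t →
      (Fintype.card V : ℝ)⁻¹ *
          ∑ y, ((W y) {x | m + t ≤ Real.log (((W y).rnDeriv Q) x).toReal}).toReal
        ≤ 2 * Real.exp (-c * min (t ^ 2 / D) t))
    (n : ℕ) (hn : 1 ≤ n) (a : ℝ) (ha : 0 ≤ a) :
    (Fintype.card V : ℝ)⁻¹ ^ n *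
        ∑ ys : Fin n → V, KL ((n : ℝ≥0∞)⁻¹ • ∑ i, W (ys i)) Q
      ≤ Real.exp (-a) +
        2 * Real.log (1 + Fintype.card V) *
          Real.exp (-c * min ((max (Real.log n - m - a) 0) ^ 2 / D)
            (max (Real.log n - m - a) 0)) :=
  stmt5_general W Q hQdef hac m D c htail n hn a
end

section
/- Let d ≥ 1 and let 1 ≤ n_min ≤ n_max be integers, and let w > 0. Define κ(n) := (1/d) log n and K := { κ(n) : n ∈ ℕ, n_min ≤ n ≤ n_max }. Then K contains a subset G whose points are pairwise separated by more than w (i.e., |κ − κ'| > w for all distinct κ, κ' ∈ G) and whose cardinality satisfies |G| ≥ log(n_max/(2 n_min)) / (log 2 + 2dw). -/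
/-- **Packing on the rate axis.** The set `K = {log n / d : n_min ≤ n ≤ n_max}` contains a
subset `G` whose points are pairwise separated by more than `w` and with
`|G| ≥ log(n_max/(2 n_min)) / (log 2 + 2dw)`. -/
theorem stmt6 (d : ℕ) (hd : 1 ≤ d) (nmin nmax : ℕ) (h1 : 1 ≤ nmin) (h2 : nmin ≤ nmax)
    (w : ℝ) (hw : 0 < w) :
    ∃ G : Finset ℝ,
      (∀ κ ∈ G, ∃ n : ℕ, nmin ≤ n ∧ n ≤ nmax ∧ κ = Real.log n / d) ∧
      (∀ κ ∈ G, ∀ κ' ∈ G, κ ≠ κ' → w < |κ - κ'|) ∧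
      Real.log ((nmax : ℝ) / (2 * nmin)) / (Real.log 2 + 2 * d * w) ≤ G.card := by
  have hd' : (1:ℝ) ≤ d := by exact_mod_cast hd
  have hdpos : (0:ℝ) < d := by linarith
  have hlog2 : (0:ℝ) < Real.log 2 := Real.log_pos (by norm_num)
  have hdw : (0:ℝ) < (d:ℝ) * w := by positivity
  set c : ℝ := Real.log 2 + 2 * d * w with hc_def
  have hc : 0 < c := by simp only [hc_def]; nlinarith
  set Lg : ℝ := Real.log ((nmax : ℝ) / (2 * nmin)) with hLg
  have hnmin : (1:ℝ) ≤ (nmin:ℝ) := by exact_mod_cast h1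
  have hnmax : (1:ℝ) ≤ (nmax:ℝ) := by exact_mod_cast le_trans h1 h2
  by_cases hL : Lg ≤ 0
  · refine ⟨∅, by simp, by simp, ?_⟩
    simpa using div_nonpos_of_nonpos_of_nonneg hL hc.le
  push_neg at hL
  set M : ℕ := ⌈Lg / c⌉₊ with hM
  set f : ℕ → ℕ := fun j => ⌈(nmin:ℝ) * Real.exp (j * c)⌉₊ with hf
  have hx1 : ∀ j : ℕ, (1:ℝ) ≤ (nmin:ℝ) * Real.exp (j * c) := by
    intro j
    have he : (1:ℝ) ≤ Real.exp (j * c) := Real.one_le_exp (by positivity)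
    nlinarith
  have hfl : ∀ j : ℕ, (nmin:ℝ) * Real.exp (j * c) ≤ (f j : ℝ) := fun j => Nat.le_ceil _
  have hfu : ∀ j : ℕ, (f j : ℝ) ≤ 2 * ((nmin:ℝ) * Real.exp (j * c)) := by
    intro j
    have h1' := Nat.ceil_lt_add_one (a := (nmin:ℝ) * Real.exp (j * c)) (by positivity)
    have := hx1 j
    simp only [hf]
    linarith
  have hfpos : ∀ j : ℕ, (0:ℝ) < (f j : ℝ) := fun j => lt_of_lt_of_le (by linarith [hx1 j]) (hfl j)
  have hloggap : ∀ i j : ℕ, i < j →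
      Real.log (f i) + (d:ℝ) * w < Real.log (f j) := by
    intro i j hij
    have hlo : Real.log (nmin) + (j:ℝ) * c ≤ Real.log (f j) := by
      have := Real.log_le_log (by positivity) (hfl j)
      rwa [Real.log_mul (by positivity) (Real.exp_ne_zero _), Real.log_exp] at this
    have hhi : Real.log (f i) ≤ Real.log 2 + Real.log (nmin) + (i:ℝ) * c := by
      have := Real.log_le_log (hfpos i) (hfu i)
      rwa [Real.log_mul (by norm_num) (by positivity),
        Real.log_mul (by positivity) (Real.exp_ne_zero _), Real.log_exp, ← add_assoc] at this
    have hij' : (i:ℝ) + 1 ≤ (j:ℝ) := by exact_mod_cast hij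
    have : (i:ℝ) * c + c ≤ (j:ℝ) * c := by nlinarith
    simp only [hc_def] at this hhi hlo ⊢
    nlinarith
  refine ⟨(Finset.range M).image (fun j => Real.log (f j) / d), ?_, ?_, ?_⟩
  · intro κ hκ
    simp only [Finset.mem_image, Finset.mem_range] at hκ
    obtain ⟨j, hj, rfl⟩ := hκ
    refine ⟨f j, ?_, ?_, rfl⟩
    · have : (nmin:ℝ) ≤ (f j : ℝ) := le_trans (by nlinarith [Real.one_le_exp (show (0:ℝ) ≤ j * c by positivity)]) (hfl j)
      exact_mod_cast this
    · have hjc : (j:ℝ) * c < Lg := by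
        have : (j:ℝ) < Lg / c := (Nat.lt_ceil).mp hj
        calc (j:ℝ) * c < (Lg / c) * c := by nlinarith
          _ = Lg := div_mul_cancel₀ _ hc.ne'
      have hexp : Real.exp ((j:ℝ) * c) < (nmax:ℝ) / (2 * nmin) := by
        have := Real.exp_lt_exp.mpr hjc
        rwa [hLg, Real.exp_log (by positivity)] at this
      have : (f j : ℝ) < (nmax:ℝ) := by
        have h := hfu j
        have h2' : Real.exp ((j:ℝ) * c) * (2 * (nmin:ℝ)) < (nmax:ℝ) :=
          (lt_div_iff₀ (by positivity : (0:ℝ) < 2 * (nmin:ℝ))).mp hexp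
        nlinarith
      exact_mod_cast this.le
  · intro κ hκ κ' hκ' hne
    simp only [Finset.mem_image, Finset.mem_range] at hκ hκ'
    obtain ⟨i, hi, rfl⟩ := hκ
    obtain ⟨j, hj, rfl⟩ := hκ'
    rcases lt_trichotomy i j with h | h | h
    · have := hloggap i j h
      rw [abs_sub_comm, abs_of_pos (by rw [sub_pos]; exact (div_lt_div_iff_of_pos_right hdpos).mpr (by linarith))]
      rw [div_sub_div_same, lt_div_iff₀ hdpos]
      linarith
    · exact absurd (by rw [h]) hne
    · have := hloggap j i h
      rw [abs_of_pos (by rw [sub_pos]; exact (div_lt_div_iff_of_pos_right hdpos).mpr (by linarith))]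
      rw [div_sub_div_same, lt_div_iff₀ hdpos]
      linarith
  · have hinj : Set.InjOn (fun j => Real.log (f j) / d) (Finset.range M) := by
      intro i _ j _ hij
      by_contra hne
      rcases lt_or_gt_of_ne hne with h | h
      · have := hloggap i j h
        have : Real.log (f i) / d < Real.log (f j) / d := by
          exact (div_lt_div_iff_of_pos_right hdpos).mpr (by linarith)
        simp only at hij; linarith [this]
      · have := hloggap j i h
        have : Real.log (f j) / d < Real.log (f i) / d := by
          exact (div_lt_div_iff_of_pos_right hdpos).mpr (by linarith)
        simp only at hij; linarith [this]
    rw [Finset.card_image_of_injOn hinj, Finset.card_range]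
    calc Lg / c ≤ (⌈Lg / c⌉₊ : ℝ) := Nat.le_ceil _
      _ = (M : ℝ) := by rw [hM]
end

section
/- Let W be a nonnegative random variable, let B > 0 and λ > 0, and suppose W ≤ B almost surely and E[W²] ≤ (B²/16) e^{−λB}. Then for every z ≥ 0, P[ W ≥ z ] ≤ 2 e^{−λ z}. -/
/-!
When `λz ≤ log 2` the bound `2 e^{-λz} ≥ 1` is trivial, and above `B` the tail is null. In between,
Chebyshev's inequality gives `z² P[W ≥ z] ≤ E[W²] ≤ (B²/16) e^{-λB}`, and since `λz > 1/2` one has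
`B ≤ z (1 + 2λ(B - z))`, so the quadratic lower bound on `exp` turns `B² e^{-λ(B - z)}` into at most
`8 z²`.
-/

open MeasureTheory

lemma one_add_two_mul_sq_le_eight_mul_exp {u : ℝ} (hu : 0 ≤ u) :
    (1 + 2 * u) ^ 2 ≤ 8 * Real.exp u := by
  nlinarith [Real.quadratic_le_exp_of_nonneg hu]

lemma sq_mul_exp_neg_le_of_half_lt {lam z B : ℝ} (hz : 0 < z) (hzB : z ≤ B)
    (hlz : 1 / 2 < lam * z) :
    B ^ 2 * Real.exp (-lam * B) ≤ 8 * z ^ 2 * Real.exp (-lam * z) := by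
  set u := lam * (B - z) with hu_def
  have hu : 0 ≤ u := by nlinarith
  have hB_le : B ≤ z * (1 + 2 * u) := by nlinarith
  have hexp_u : (1 + 2 * u) ^ 2 * Real.exp (-u) ≤ 8 := by
    rw [Real.exp_neg, ← div_eq_mul_inv, div_le_iff₀ (Real.exp_pos u)]
    exact one_add_two_mul_sq_le_eight_mul_exp hu
  calc B ^ 2 * Real.exp (-lam * B) = B ^ 2 * Real.exp (-u) * Real.exp (-lam * z) := by
        rw [mul_assoc, ← Real.exp_add, hu_def]; ring_nf
    _ ≤ (z * (1 + 2 * u)) ^ 2 * Real.exp (-u) * Real.exp (-lam * z) := by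
        gcongr; linarith
    _ = z ^ 2 * ((1 + 2 * u) ^ 2 * Real.exp (-u)) * Real.exp (-lam * z) := by ring
    _ ≤ 8 * z ^ 2 * Real.exp (-lam * z) := by
        rw [mul_comm 8 (z ^ 2)]; gcongr

lemma one_le_two_mul_exp_neg_of_le_log_two {x : ℝ} (hx : x ≤ Real.log 2) :
    1 ≤ 2 * Real.exp (-x) := by
  have := Real.exp_le_exp.2 (neg_le_neg hx)
  rw [Real.exp_neg, Real.exp_log two_pos] at this
  linarith

lemma sq_mul_measureReal_ge_le_integral_sq {Ω : Type*} [MeasurableSpace Ω] {μ : Measure Ω}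
    [IsFiniteMeasure μ] {f : Ω → ℝ} (hf : Integrable (fun ω => f ω ^ 2) μ) {z : ℝ} (hz : 0 ≤ z) :
    z ^ 2 * μ.real {ω | z ≤ f ω} ≤ ∫ ω, f ω ^ 2 ∂μ := by
  have hsub : {ω | z ≤ f ω} ⊆ {ω | z ^ 2 ≤ f ω ^ 2} := fun ω hω =>
    pow_le_pow_left₀ hz hω 2
  calc z ^ 2 * μ.real {ω | z ≤ f ω} ≤ z ^ 2 * μ.real {ω | z ^ 2 ≤ f ω ^ 2} :=
        mul_le_mul_of_nonneg_left (measureReal_mono hsub) (sq_nonneg z)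
    _ ≤ ∫ ω, f ω ^ 2 ∂μ :=
        mul_meas_ge_le_integral_of_nonneg (Filter.Eventually.of_forall fun ω => sq_nonneg _) hf _

theorem stmt8_general {Ω : Type*} [MeasurableSpace Ω] (P : Measure Ω) [IsProbabilityMeasure P]
    (W : Ω → ℝ) (hWmeas : Measurable W) (B lam : ℝ)
    (hW0 : ∀ᵐ ω ∂P, 0 ≤ W ω) (hWB : ∀ᵐ ω ∂P, W ω ≤ B)
    (hmom : ∫ ω, (W ω) ^ 2 ∂P ≤ B ^ 2 / 16 * Real.exp (-lam * B)) :
    ∀ z : ℝ, 0 ≤ z → (P {ω | z ≤ W ω}).toReal ≤ 2 * Real.exp (-lam * z) := by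
  intro z hz
  rw [← measureReal_def]
  have hlog2 : 1 / 2 < Real.log 2 := by have := Real.log_two_gt_d9; norm_num at this ⊢; linarith
  rcases le_or_gt (lam * z) (Real.log 2) with hsmall | hlarge
  · rw [neg_mul]
    exact measureReal_le_one.trans (one_le_two_mul_exp_neg_of_le_log_two hsmall)
  rcases lt_or_ge B z with hBz | hzB
  · rw [(measureReal_eq_zero_iff).2 (measure_eq_zero_iff_ae_notMem.2 <|
      hWB.mono fun ω hω hzω => by simp at hzω; linarith)]
    positivity
  have hzpos : 0 < z := hz.lt_of_ne (by rintro rfl; simp at hlarge; linarith)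
  have hint : Integrable (fun ω => W ω ^ 2) P :=
    .of_bound (hWmeas.pow_const 2).aestronglyMeasurable (B ^ 2) <| by
      filter_upwards [hW0, hWB] with ω h0 hb
      rw [Real.norm_of_nonneg (sq_nonneg _)]
      exact pow_le_pow_left₀ h0 hb 2
  have hnum := sq_mul_exp_neg_le_of_half_lt hzpos hzB (hlog2.trans hlarge)
  have hP : z ^ 2 * P.real {ω | z ≤ W ω} ≤ z ^ 2 * (2 * Real.exp (-lam * z)) :=
    calc z ^ 2 * P.real {ω | z ≤ W ω} ≤ ∫ ω, W ω ^ 2 ∂P :=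
          sq_mul_measureReal_ge_le_integral_sq hint hz
      _ ≤ B ^ 2 / 16 * Real.exp (-lam * B) := hmom
      _ ≤ z ^ 2 * (2 * Real.exp (-lam * z)) := by nlinarith [Real.exp_pos (-lam * z)]
  exact le_of_mul_le_mul_left hP (by positivity)

/-- A nonnegative random variable bounded by `B` with `E[W²] ≤ (B²/16) e^{−λB}` satisfies the
sub-exponential tail bound `P[W ≥ z] ≤ 2 e^{−λz}` for all `z ≥ 0`. -/
theorem stmt8 {Ω : Type*} [MeasurableSpace Ω] (P : Measure Ω) [IsProbabilityMeasure P]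
    (W : Ω → ℝ) (hWmeas : Measurable W) (B lam : ℝ) (hB : 0 < B) (hlam : 0 < lam)
    (hW0 : ∀ᵐ ω ∂P, 0 ≤ W ω) (hWB : ∀ᵐ ω ∂P, W ω ≤ B)
    (hmom : ∫ ω, (W ω) ^ 2 ∂P ≤ B ^ 2 / 16 * Real.exp (-lam * B)) :
    ∀ z : ℝ, 0 ≤ z → (P {ω | z ≤ W ω}).toReal ≤ 2 * Real.exp (-lam * z) :=
  stmt8_general P W hWmeas B lam hW0 hWB hmom
end

section
/- Let W be a nonnegative random variable, let B > 0 and λ > 0, and suppose W ≤ B almost surely and E[W²] ≤ (B²/16) e^{−λB}. Then the moment generating function satisfies E[ e^{λ W} ] ≤ 2. -/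
open MeasureTheory Nat

theorem exp_sub_one_sub_eq (y : ℝ) : Real.exp y - 1 - y = ∑' n : ℕ, y ^ (n + 2) / (n + 2)! := by
  have hs := Real.summable_pow_div_factorial y
  have h1 : Real.exp y = ∑' n : ℕ, y ^ n / n ! := by
    rw [Real.exp_eq_exp_ℝ, NormedSpace.exp_eq_tsum_div]
  have hs1 : Summable (fun n : ℕ => y ^ (n + 1) / (n + 1)!) := by
    exact_mod_cast (summable_nat_add_iff 1).2 hs
  rw [h1, Summable.tsum_eq_zero_add hs, Summable.tsum_eq_zero_add hs1]
  simp [Nat.factorial]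

theorem bennett_aux {x T : ℝ} (hx : 0 ≤ x) (hxT : x ≤ T) :
    Real.exp x - 1 - x ≤ x ^ 2 / T ^ 2 * (Real.exp T - 1 - T) := by
  rcases eq_or_lt_of_le (hx.trans hxT) with hT | hT
  · have hx0 : x = 0 := le_antisymm (hxT.trans hT.symm.le) hx
    simp [hx0, ← hT]
  have hsx : Summable (fun n : ℕ => x ^ (n + 2) / (n + 2)!) := by
    exact_mod_cast (summable_nat_add_iff 2).2 (Real.summable_pow_div_factorial x)
  have hsT : Summable (fun n : ℕ => T ^ (n + 2) / (n + 2)!) := by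
    exact_mod_cast (summable_nat_add_iff 2).2 (Real.summable_pow_div_factorial T)
  rw [exp_sub_one_sub_eq, exp_sub_one_sub_eq, ← tsum_mul_left]
  refine Summable.tsum_le_tsum (fun n => ?_) hsx (hsT.mul_left _)
  have hfac : (0:ℝ) < ((n + 2)! : ℝ) := by positivity
  rw [div_le_iff₀ hfac]
  have hxn : x ^ n ≤ T ^ n := pow_le_pow_left₀ hx hxT n
  have hxx : x ^ (n + 2) = x ^ 2 * x ^ n := by ring
  rw [hxx]
  have h2 : x ^ 2 / T ^ 2 * (T ^ (n + 2) / ((n + 2)! : ℝ)) * ((n + 2)! : ℝ)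
      = x ^ 2 * T ^ n := by field_simp; ring
  rw [h2]
  nlinarith [pow_nonneg hx 2]

set_option maxHeartbeats 1000000 in
/-- A nonnegative random variable bounded by `B` with `E[W²] ≤ (B²/16) e^{−λB}` has moment
generating function `E[e^{λW}] ≤ 2`. -/
theorem stmt9 {Ω : Type*} [MeasurableSpace Ω] (P : Measure Ω) [IsProbabilityMeasure P]
    (W : Ω → ℝ) (hWmeas : Measurable W) (B lam : ℝ) (hB : 0 < B) (hlam : 0 < lam)
    (hW0 : ∀ᵐ ω ∂P, 0 ≤ W ω) (hWB : ∀ᵐ ω ∂P, W ω ≤ B)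
    (hmom : ∫ ω, (W ω) ^ 2 ∂P ≤ B ^ 2 / 16 * Real.exp (-lam * B)) :
    ∫ ω, Real.exp (lam * W ω) ∂P ≤ 2 := by
  set t := lam * B with ht
  have ht0 : 0 < t := mul_pos hlam hB
  set a : ℝ := B / 4 * Real.exp (-(t / 2)) with ha_def
  have ha : 0 < a := by positivity
  set D : ℝ := Real.exp t - 1 - t with hD
  have hD0 : 0 ≤ D := by nlinarith [Real.add_one_le_exp t]
  set c2 : ℝ := lam / a + D / B ^ 2 with hc2
  have hc20 : 0 ≤ c2 := by positivity
  clear_value t a D c2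
  -- integrability
  have hintW2 : Integrable (fun ω => (W ω) ^ 2) P := by
    refine (integrable_const (B ^ 2)).mono' (hWmeas.pow_const 2).aestronglyMeasurable ?_
    filter_upwards [hW0, hWB] with ω h0 h1
    rw [Real.norm_eq_abs, abs_of_nonneg (sq_nonneg _)]
    nlinarith
  have hint_exp : Integrable (fun ω => Real.exp (lam * W ω)) P := by
    refine (integrable_const (Real.exp t)).mono'
      ((Real.measurable_exp.comp (measurable_const.mul hWmeas)).aestronglyMeasurable) ?_
    filter_upwards [hWB] with ω h1
    rw [Real.norm_eq_abs, abs_of_pos (Real.exp_pos _)]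
    exact Real.exp_le_exp.2 (by nlinarith)
  -- pointwise bound
  have hptwise : ∀ᵐ ω ∂P, Real.exp (lam * W ω) ≤ (1 + lam * a) + c2 * (W ω) ^ 2 := by
    filter_upwards [hW0, hWB] with ω h0 h1
    set w := W ω with hw
    clear_value w
    have hxT : lam * w ≤ t := by rw [ht]; nlinarith
    have hx : 0 ≤ lam * w := by positivity
    have hben := bennett_aux hx hxT
    rw [← hD] at hben
    have hratio : (lam * w) ^ 2 / t ^ 2 = w ^ 2 / B ^ 2 := by
      rw [ht]; field_simp
    rw [hratio] at hben
    have hben' : Real.exp (lam * w) - 1 - lam * w ≤ D / B ^ 2 * w ^ 2 := by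
      have : w ^ 2 / B ^ 2 * D = D / B ^ 2 * w ^ 2 := by ring
      linarith [hben, this.ge.trans_eq rfl]
    have htrick : w ≤ a + w ^ 2 / a := by
      have key : w * a ≤ a * a + w ^ 2 := by nlinarith [sq_nonneg (w - a), mul_nonneg h0 ha.le]
      calc w = w * a / a := by field_simp
        _ ≤ (a * a + w ^ 2) / a := by gcongr
        _ = a + w ^ 2 / a := by field_simp
    have h1' : lam * w ≤ lam * a + lam / a * w ^ 2 := by
      have h := mul_le_mul_of_nonneg_left htrick hlam.le
      calc lam * w ≤ lam * (a + w ^ 2 / a) := h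
        _ = lam * a + lam / a * w ^ 2 := by ring
    have hexpand : c2 * w ^ 2 = lam / a * w ^ 2 + D / B ^ 2 * w ^ 2 := by rw [hc2]; ring
    linarith [hben', h1', hexpand]
  -- integrate
  have hintg : Integrable (fun ω => (1 + lam * a) + c2 * (W ω) ^ 2) P :=
    (integrable_const _).add (hintW2.const_mul _)
  have hle : ∫ ω, Real.exp (lam * W ω) ∂P ≤ ∫ ω, ((1 + lam * a) + c2 * (W ω) ^ 2) ∂P :=
    integral_mono_ae hint_exp hintg hptwise
  have heq : ∫ ω, ((1 + lam * a) + c2 * (W ω) ^ 2) ∂P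
      = (1 + lam * a) + c2 * ∫ ω, (W ω) ^ 2 ∂P := by
    rw [integral_add (integrable_const _) (hintW2.const_mul _), integral_const,
      integral_const_mul]
    simp
  set M := ∫ ω, (W ω) ^ 2 ∂P with hM
  have hM0 : 0 ≤ M := integral_nonneg (fun ω => sq_nonneg _)
  have hMK : M ≤ B ^ 2 / 16 * Real.exp (-t) := by
    rw [ht]; convert hmom using 3; ring
  have hkey : c2 * M ≤ c2 * (B ^ 2 / 16 * Real.exp (-t)) :=
    mul_le_mul_of_nonneg_left hMK hc20
  -- arithmetic facts
  have hexp_half : t ≤ Real.exp (t / 2) := by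
    have h4 : t / 4 + 1 ≤ Real.exp (t / 4) := Real.add_one_le_exp _
    have hsq : Real.exp (t / 2) = Real.exp (t / 4) * Real.exp (t / 4) := by
      rw [← Real.exp_add]; ring_nf
    nlinarith [sq_nonneg (1 - t / 4), Real.exp_pos (t / 4)]
  have hE := Real.exp_pos (t / 2)
  have hhalf : t / 4 * Real.exp (-(t / 2)) ≤ 1 / 4 := by
    rw [Real.exp_neg]
    have key : t * (Real.exp (t / 2))⁻¹ ≤ 1 := by
      rw [← mul_inv_cancel₀ hE.ne']
      gcongr
    have hre : t / 4 * (Real.exp (t / 2))⁻¹ = t * (Real.exp (t / 2))⁻¹ / 4 := by ring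
    rw [hre]; linarith
  have hterm1 : lam * a ≤ 1 / 4 := by
    have h : lam * a = t / 4 * Real.exp (-(t / 2)) := by
      rw [ha_def, ht]; ring
    rw [h]; exact hhalf
  have hterm2 : lam / a * (B ^ 2 / 16 * Real.exp (-t)) ≤ 1 / 4 := by
    have hrw : lam / a * (B ^ 2 / 16 * Real.exp (-t)) = t / 4 * Real.exp (-(t / 2)) := by
      rw [ha_def, ht]
      have h2 : Real.exp (-(lam * B)) = Real.exp (-(lam * B / 2)) * Real.exp (-(lam * B / 2)) := by
        rw [← Real.exp_add]; ring_nf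
      rw [h2]
      have hEp := (Real.exp_pos (-(lam * B / 2))).ne'
      field_simp
      ring
    rw [hrw]; exact hhalf
  have hterm3 : D / B ^ 2 * (B ^ 2 / 16 * Real.exp (-t)) ≤ 1 / 16 := by
    have hrw : D / B ^ 2 * (B ^ 2 / 16 * Real.exp (-t)) = D * Real.exp (-t) / 16 := by
      field_simp
    rw [hrw, Real.exp_neg]
    have hEt := Real.exp_pos t
    have hDle : D ≤ Real.exp t := by rw [hD]; linarith
    have key : D * (Real.exp t)⁻¹ ≤ 1 := by
      rw [← mul_inv_cancel₀ hEt.ne']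
      gcongr
    linarith
  calc ∫ ω, Real.exp (lam * W ω) ∂P ≤ (1 + lam * a) + c2 * M := by rw [← heq]; exact hle
    _ ≤ (1 + lam * a) + c2 * (B ^ 2 / 16 * Real.exp (-t)) := by linarith
    _ = 1 + lam * a + (lam / a * (B ^ 2 / 16 * Real.exp (-t))
        + D / B ^ 2 * (B ^ 2 / 16 * Real.exp (-t))) := by rw [hc2]; ring
    _ ≤ 1 + 1 / 4 + (1 / 4 + 1 / 16) := by linarith
    _ ≤ 2 := by norm_num
end
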